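/- Let N ≥ 1, let 0 < ρ < 2, and let A = (A₁,…,A_N) be an N-tuple of bounded linear operators on a complex Hilbert space X. Then ρ·w_{ρ,N}(A) = (2−ρ)·w_{2−ρ,N}(A). -/

import Mathlib

open ContinuousLinearMap

noncomputable section

/-- A continuous linear operator on a complex Hilbert space is unitary. -/
def IsUnitaryOp {Y : Type*} [NormedAddCommGroup Y] [InnerProductSpace ℂ Y] [CompleteSpace Y]
    (T : Y →L[ℂ] Y) : Prop :=
  T ∘L adjoint T = 1 ∧ adjoint T ∘L T = 1

/-- A unitary `ρ`-dilation of an `N`-tuple of bounded operators on a complex Hilbert space `X`: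
a complex Hilbert space `Y`, a linear isometry `ι : X → Y`, and an `N`-tuple `At` of operators
on `Y` such that every unimodular combination `ζ₁At₁ + ⋯ + ζ_N At_N` is unitary, and
`(z₁A₁ + ⋯ + z_N A_N)ⁿ = ρ · ι* ∘ (z₁At₁ + ⋯ + z_N At_N)ⁿ ∘ ι` for all `z ∈ ℂ^N` and `n ≥ 1`. -/
structure UnitaryRhoDilation (N : ℕ) (ρ : ℝ) (X : Type*) [NormedAddCommGroup X]
    [InnerProductSpace ℂ X] [CompleteSpace X] (A : Fin N → X →L[ℂ] X) where
  Y : Type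
  [instN : NormedAddCommGroup Y]
  [instI : InnerProductSpace ℂ Y]
  [instC : CompleteSpace Y]
  ι : X →L[ℂ] Y
  isom : Isometry ι
  At : Fin N → Y →L[ℂ] Y
  unit : ∀ ζ : Fin N → ℂ, (∀ k, ‖ζ k‖ = 1) → IsUnitaryOp (∑ k, ζ k • At k)
  dil : ∀ (z : Fin N → ℂ) (n : ℕ), 1 ≤ n →
    (∑ k, z k • A k) ^ n = (ρ : ℂ) • (adjoint ι ∘L (((∑ k, z k • At k) ^ n) ∘L ι))

/-- The class `C_{ρ,N}`: `N`-tuples of bounded operators admitting a unitary `ρ`-dilation. -/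
def MemC (N : ℕ) (ρ : ℝ) {X : Type*} [NormedAddCommGroup X] [InnerProductSpace ℂ X]
    [CompleteSpace X] (A : Fin N → X →L[ℂ] X) : Prop :=
  Nonempty (UnitaryRhoDilation N ρ X A)

/-- The set of positive scalings `u` with `(1/u)·A ∈ C_{ρ,N}`. -/
def wSet (N : ℕ) (ρ : ℝ) {X : Type*} [NormedAddCommGroup X] [InnerProductSpace ℂ X]
    [CompleteSpace X] (A : Fin N → X →L[ℂ] X) : Set ℝ :=
  {u : ℝ | 0 < u ∧ MemC N ρ (fun k => ((u : ℂ))⁻¹ • A k)}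

/-- The operator radius `w_{ρ,N}(A) = inf { u > 0 : (1/u)·A ∈ C_{ρ,N} }`. -/
def wRad (N : ℕ) (ρ : ℝ) {X : Type*} [NormedAddCommGroup X] [InnerProductSpace ℂ X]
    [CompleteSpace X] (A : Fin N → X →L[ℂ] X) : ℝ :=
  sInf (wSet N ρ A)

/-! Let `(Y, ι, Ã)` be a unitary `ρ`-dilation of `A` and let `R = 2ιι* - 1` be the reflection of
`Y` fixing the range of `ι`; it is unitary, so every `ζ₁Ã₁R + ⋯ + ζ_NÃ_NR` is unitary too.
Writing `T = ∑ zₖAₖ`, `U = ∑ zₖÃₖ`, the identity `ι*URWι = 2(ι*Uι)(ι*Wι) - ι*UWι` and induction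
give `ρᵐ⁺¹ ι*Uᵏ(UR)ᵐ⁺¹ι = (2-ρ)ᵐ Tᵏ⁺ᵐ⁺¹`, i.e. `(Y, ι, ÃR)` is a unitary `(2-ρ)`-dilation of
`((2-ρ)/ρ)·A`. Hence `u ↦ ρu/(2-ρ)` maps `{u : A/u ∈ C_ρ}` onto `{u : A/u ∈ C_{2-ρ}}`. -/

section RangeReflection

variable {X Y : Type*} [NormedAddCommGroup X] [InnerProductSpace ℂ X] [CompleteSpace X]
  [NormedAddCommGroup Y] [InnerProductSpace ℂ Y] [CompleteSpace Y]

lemma isUnitaryOp_iff_mem_unitary (T : Y →L[ℂ] Y) :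
    IsUnitaryOp T ↔ T ∈ unitary (Y →L[ℂ] Y) := by
  rw [Unitary.mem_iff, star_eq_adjoint, and_comm]
  rfl

def rangeReflection (ι : X →L[ℂ] Y) : Y →L[ℂ] Y :=
  2 * (ι ∘L adjoint ι) - 1

variable {ι : X →L[ℂ] Y}

lemma isStarProjection_comp_adjoint (hι : adjoint ι ∘L ι = 1) :
    IsStarProjection (ι ∘L adjoint ι) := by
  refine isStarProjection_iff'.mpr ⟨?_, ?_⟩
  · change ι ∘L (adjoint ι ∘L ι) ∘L adjoint ι = ι ∘L adjoint ι
    rw [hι, one_def, id_comp]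
  · rw [star_eq_adjoint, adjoint_comp, adjoint_adjoint]

lemma rangeReflection_mem_unitary (hι : adjoint ι ∘L ι = 1) :
    rangeReflection ι ∈ unitary (Y →L[ℂ] Y) :=
  (isStarProjection_comp_adjoint hι).two_mul_sub_one_mem_unitary

lemma rangeReflection_comp_self (hι : adjoint ι ∘L ι = 1) : rangeReflection ι ∘L ι = ι := by
  rw [rangeReflection, two_mul, sub_comp, add_comp, comp_assoc, hι]
  simp only [comp_id, one_def, id_comp]
  abel

variable {U : Y →L[ℂ] Y} {T : X →L[ℂ] X} {ρ : ℂ}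

lemma mul_mul_rangeReflection_mul (V W : Y →L[ℂ] Y) :
    V * (U * rangeReflection ι * W) = 2 * (V * U * (ι ∘L adjoint ι) * W) - V * U * W := by
  rw [rangeReflection]
  noncomm_ring

lemma smul_compression_pow_mul_rangeReflection_pow (hι : adjoint ι ∘L ι = 1)
    (hdil : ∀ n : ℕ, 1 ≤ n → T ^ n = ρ • (adjoint ι ∘L ((U ^ n) ∘L ι))) (m k : ℕ) :
    ρ ^ (m + 1) • (adjoint ι ∘L ((U ^ k * (U * rangeReflection ι) ^ (m + 1)) ∘L ι)) =
      (2 - ρ) ^ m • T ^ (k + m + 1) := by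
  induction m generalizing k with
  | zero =>
    rw [zero_add, pow_one, pow_one, ← mul_assoc, ← pow_succ, mul_def, comp_assoc,
      rangeReflection_comp_self hι, hdil _ (by omega)]
    simp
  | succ m ih =>
    rw [pow_succ' (U * _) (m + 1), mul_mul_rangeReflection_mul, ← pow_succ]
    set W := (U * rangeReflection ι) ^ (m + 1)
    have hfactor : adjoint ι ∘L (U ^ (k + 1) * (ι ∘L adjoint ι) * W) ∘L ι =
        (adjoint ι ∘L (U ^ (k + 1)) ∘L ι) ∘L (adjoint ι ∘L W ∘L ι) := by
      simp only [mul_def, comp_assoc]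
    have hW : ρ ^ (m + 1) • (adjoint ι ∘L W ∘L ι) = (2 - ρ) ^ m • T ^ (m + 1) := by
      simpa using ih 0
    have hprod : ρ ^ (m + 1 + 1) • (adjoint ι ∘L (U ^ (k + 1) * (ι ∘L adjoint ι) * W) ∘L ι) =
        (2 - ρ) ^ m • T ^ (k + 1 + m + 1) := by
      rw [hfactor, pow_succ', ← smul_smul, ← comp_smul, hW, ← smul_comp, ← hdil _ (by omega),
        comp_smul, ← mul_def, ← pow_add]
      rfl
    rw [two_mul, sub_comp, add_comp, comp_sub, comp_add, smul_sub, smul_add, hprod,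
      pow_succ' ρ (m + 1), ← smul_smul, ih (k + 1), show k + (m + 1) + 1 = k + 1 + m + 1 by ring]
    module

lemma div_smul_pow_eq_compression_pow_mul_rangeReflection (hι : adjoint ι ∘L ι = 1)
    (hρ : ρ ≠ 0) (hdil : ∀ n : ℕ, 1 ≤ n → T ^ n = ρ • (adjoint ι ∘L ((U ^ n) ∘L ι)))
    (n : ℕ) (hn : 1 ≤ n) :
    (((2 - ρ) / ρ) • T) ^ n =
      (2 - ρ) • (adjoint ι ∘L (((U * rangeReflection ι) ^ n) ∘L ι)) := by
  obtain ⟨m, rfl⟩ : ∃ m, n = m + 1 := ⟨n - 1, by omega⟩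
  have h := smul_compression_pow_mul_rangeReflection_pow hι hdil m 0
  rw [pow_zero, one_mul, zero_add] at h
  calc (((2 - ρ) / ρ) • T) ^ (m + 1)
      = ((2 - ρ) / ρ ^ (m + 1)) • ((2 - ρ) ^ m • T ^ (m + 1)) := by
        rw [smul_pow, smul_smul, div_pow, pow_succ (2 - ρ)]
        ring_nf
    _ = (2 - ρ) • (adjoint ι ∘L (((U * rangeReflection ι) ^ (m + 1)) ∘L ι)) := by
        rw [← h, smul_smul, div_mul_cancel₀ _ (pow_ne_zero _ hρ)]

end RangeReflection

lemma MemC.two_sub {N : ℕ} {ρ : ℝ} (hρ : ρ ≠ 0) {X : Type*} [NormedAddCommGroup X]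
    [InnerProductSpace ℂ X] [CompleteSpace X] {A : Fin N → X →L[ℂ] X} (h : MemC N ρ A) :
    MemC N (2 - ρ) (fun k => (((2 - ρ) / ρ : ℝ) : ℂ) • A k) := by
  obtain ⟨d⟩ := h
  let := d.instN; let := d.instI; let := d.instC
  have hι : adjoint d.ι ∘L d.ι = 1 := (isometry_iff_adjoint_comp_self d.ι).mp d.isom
  have hsum : ∀ z : Fin N → ℂ,
      ∑ k, z k • (d.At k * rangeReflection d.ι) = (∑ k, z k • d.At k) * rangeReflection d.ι := by
    simp [Finset.sum_mul]
  refine ⟨⟨d.Y, d.ι, d.isom, fun k => d.At k * rangeReflection d.ι, fun ζ hζ => ?_,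
    fun z n hn => ?_⟩⟩
  · rw [hsum, isUnitaryOp_iff_mem_unitary]
    exact mul_mem ((isUnitaryOp_iff_mem_unitary _).mp (d.unit ζ hζ))
      (rangeReflection_mem_unitary hι)
  · have hscale : ∑ k, z k • ((((2 - ρ) / ρ : ℝ) : ℂ) • A k) =
        (((2 - ρ) / ρ : ℝ) : ℂ) • ∑ k, z k • A k := by
      rw [Finset.smul_sum]
      exact Finset.sum_congr rfl fun k _ => smul_comm _ _ _
    rw [hscale, hsum]
    push_cast
    exact div_smul_pow_eq_compression_pow_mul_rangeReflection hι (by exact_mod_cast hρ)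
      (d.dil z) n hn

section OperatorRadius

variable {N : ℕ} {ρ : ℝ} {X : Type*} [NormedAddCommGroup X] [InnerProductSpace ℂ X]
  [CompleteSpace X] {A : Fin N → X →L[ℂ] X}

lemma div_two_sub_mul_mem_wSet_two_sub (hρ0 : 0 < ρ) (hρ2 : ρ < 2) {u : ℝ}
    (hu : u ∈ wSet N ρ A) : ρ / (2 - ρ) * u ∈ wSet N (2 - ρ) A := by
  have hρ2' : 0 < 2 - ρ := by linarith
  refine ⟨by have := hu.1; positivity, ?_⟩
  convert hu.2.two_sub hρ0.ne' using 2 with k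
  rw [smul_smul]
  congr 1
  push_cast
  field_simp

open scoped Pointwise in
lemma wSet_two_sub (hρ0 : 0 < ρ) (hρ2 : ρ < 2) :
    wSet N (2 - ρ) A = (ρ / (2 - ρ)) • wSet N ρ A := by
  ext v
  rw [Set.mem_smul_set]
  constructor
  · intro hv
    refine ⟨(2 - ρ) / ρ * v, ?_, ?_⟩
    · simpa using div_two_sub_mul_mem_wSet_two_sub (ρ := 2 - ρ) (by linarith) (by linarith) hv
    · have : 2 - ρ ≠ 0 := by linarith
      rw [smul_eq_mul]
      field_simp
  · rintro ⟨u, hu, rfl⟩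
    exact div_two_sub_mul_mem_wSet_two_sub hρ0 hρ2 hu

end OperatorRadius

theorem wRad_symmetry_general (N : ℕ) (ρ : ℝ) (hρ0 : 0 < ρ) (hρ2 : ρ < 2)
    {X : Type*} [NormedAddCommGroup X] [InnerProductSpace ℂ X] [CompleteSpace X]
    (A : Fin N → X →L[ℂ] X) :
    ρ * wRad N ρ A = (2 - ρ) * wRad N (2 - ρ) A := by
  have hρ2' : 0 < 2 - ρ := by linarith
  rw [wRad, wRad, wSet_two_sub hρ0 hρ2, Real.sInf_smul_of_nonneg (by positivity), smul_eq_mul]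
  field_simp

/-- for `0 < ρ < 2` one has `ρ·w_{ρ,N}(A) = (2−ρ)·w_{2−ρ,N}(A)`. -/
theorem wRad_symmetry (N : ℕ) (hN : 1 ≤ N) (ρ : ℝ) (hρ0 : 0 < ρ) (hρ2 : ρ < 2)
    {X : Type*} [NormedAddCommGroup X] [InnerProductSpace ℂ X] [CompleteSpace X]
    (A : Fin N → X →L[ℂ] X) :
    ρ * wRad N ρ A = (2 - ρ) * wRad N (2 - ρ) A :=
  wRad_symmetry_general N ρ hρ0 hρ2 A
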